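/- arXiv:2201.10535 — 7 statements merged into one kernel-verified Lean document; each statement's English description precedes it below -/
import Mathlib

section
/- Let H be a complex Hilbert space, let V : H → H be a bounded isometry (V*V = I), and let f, g ∈ H. Then the rank-one perturbation V + f⊗g is left-invertible if and only if c(V;f,g) ≠ 0, where c(V;f,g) = (‖f‖² − ‖V*f‖²)‖g‖² + |1 + ⟨V*f, g⟩|². -/
/-!
Put `T = V + f ⊗ g` and `u = V* f`. Since `V* V = 1`, the Gram operator is the rank-two
perturbation `T* T = 1 + u ⊗ g + g ⊗ u + ‖f‖² g ⊗ g` of the identity, and `c(V;f,g)` is its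
determinant on the invariant plane `span {u, g}`. If `c ≠ 0`, then `T* T` has an explicit left
inverse `B`, and `B T*` is a left inverse of `T`. Conversely, `‖f‖² − ‖V* f‖² = ‖f − V V* f‖²`,
so `c` is a sum of two nonnegative terms. If both vanish, then `⟨g, u⟩ = −1` and `f = V u`, so
`T u = V u − f = 0` with `u ≠ 0`.
-/

open ContinuousLinearMap

/-- The rank-one operator `f ⊗ g : h ↦ ⟨h, g⟩ f` (inner product linear in the
first argument, i.e. `⟪g, h⟫ • f` in Mathlib's convention). -/
noncomputable def rankOne {H : Type*} [NormedAddCommGroup H] [InnerProductSpace ℂ H]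
    (f g : H) : H →L[ℂ] H :=
  (innerSL ℂ g).smulRight f

section

variable {𝕜 E : Type*} [RCLike 𝕜] [NormedAddCommGroup E] [InnerProductSpace 𝕜 E]

local notation "⟪" x ", " y "⟫" => inner 𝕜 x y

theorem exists_leftInverse_one_add_rankOne (u g : E) (a : ℝ)
    (hc : (a - ‖u‖ ^ 2) * ‖g‖ ^ 2 + ‖1 + ⟪g, u⟫‖ ^ 2 ≠ 0) :
    ∃ B : E →L[𝕜] E, B ∘L (1 + InnerProductSpace.rankOne 𝕜 u g
      + InnerProductSpace.rankOne 𝕜 g u + (a : 𝕜) • InnerProductSpace.rankOne 𝕜 g g) = 1 := by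
  set c : 𝕜 := (1 + ⟪g, u⟫) * (1 + ⟪u, g⟫) + (a - ⟪u, u⟫) * ⟪g, g⟫ with hc_def
  have hc' : c ≠ 0 := by
    have : c = (((a - ‖u‖ ^ 2) * ‖g‖ ^ 2 + ‖1 + ⟪g, u⟫‖ ^ 2 : ℝ) : 𝕜) := by
      rw [hc_def, ← inner_conj_symm u g, inner_self_eq_norm_sq_to_K u,
        inner_self_eq_norm_sq_to_K g]
      push_cast
      rw [← RCLike.mul_conj]
      simp only [map_add, map_one]
      ring
    exact this ▸ RCLike.ofReal_ne_zero.mpr hc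
  refine ⟨1 - ((1 + ⟪u, g⟫) / c) • InnerProductSpace.rankOne 𝕜 u g
      - ((1 + ⟪g, u⟫) / c) • InnerProductSpace.rankOne 𝕜 g u
      + ((⟪u, u⟫ - a) / c) • InnerProductSpace.rankOne 𝕜 g g
      + (⟪g, g⟫ / c) • InnerProductSpace.rankOne 𝕜 u u, ?_⟩
  ext x
  simp only [comp_apply, add_apply, sub_apply, smul_apply, one_apply_eq_self,
    InnerProductSpace.rankOne_apply, map_add, map_smul]
  match_scalars <;> field_simp <;> ring

variable {F : Type*} [NormedAddCommGroup F] [InnerProductSpace 𝕜 F]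
  [CompleteSpace E] [CompleteSpace F] {V : E →L[𝕜] F}

theorem norm_sub_apply_adjoint_apply_sq (hV : adjoint V ∘L V = 1) (f : F) :
    ‖f - V (adjoint V f)‖ ^ 2 = ‖f‖ ^ 2 - ‖adjoint V f‖ ^ 2 := by
  have hnorm : ‖V (adjoint V f)‖ = ‖adjoint V f‖ := V.norm_map_iff_adjoint_comp_self.mpr hV _
  have hinner : RCLike.re ⟪f, V (adjoint V f)⟫ = ‖adjoint V f‖ ^ 2 := by
    rw [← adjoint_inner_left, inner_self_eq_norm_sq (𝕜 := 𝕜)]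
  rw [norm_sub_sq (𝕜 := 𝕜), hinner, hnorm]
  ring

theorem adjoint_comp_add_rankOne (hV : adjoint V ∘L V = 1) (f : F) (g : E) :
    adjoint (V + InnerProductSpace.rankOne 𝕜 f g) ∘L (V + InnerProductSpace.rankOne 𝕜 f g) =
      1 + InnerProductSpace.rankOne 𝕜 (adjoint V f) g
        + InnerProductSpace.rankOne 𝕜 g (adjoint V f)
        + ((‖f‖ ^ 2 : ℝ) : 𝕜) • InnerProductSpace.rankOne 𝕜 g g := by
  rw [map_add, InnerProductSpace.adjoint_rankOne, add_comp, comp_add, comp_add, hV,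
    InnerProductSpace.comp_rankOne, InnerProductSpace.rankOne_comp,
    InnerProductSpace.rankOne_comp_rankOne, inner_self_eq_norm_sq_to_K]
  push_cast
  abel

theorem not_injective_add_rankOne (hV : adjoint V ∘L V = 1) (f : F) (g : E)
    (hc : (‖f‖ ^ 2 - ‖adjoint V f‖ ^ 2) * ‖g‖ ^ 2 + ‖1 + ⟪g, adjoint V f⟫‖ ^ 2 = 0) :
    ¬ Function.Injective (V + InnerProductSpace.rankOne 𝕜 f g) := by
  set u := adjoint V f
  rw [← norm_sub_apply_adjoint_apply_sq hV] at hc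
  have hgu : ⟪g, u⟫ = -1 := by
    have : ‖1 + ⟪g, u⟫‖ = 0 := by
      nlinarith [sq_nonneg ‖1 + ⟪g, u⟫‖, sq_nonneg (‖f - V u‖ * ‖g‖)]
    linear_combination norm_eq_zero.mp this
  have hu : u ≠ 0 := by rintro hu; simp [hu] at hgu
  have hg : g ≠ 0 := by rintro rfl; simp at hgu
  have hf : f = V u := by
    have : ‖f - V u‖ * ‖g‖ = 0 := by
      nlinarith [sq_nonneg ‖1 + ⟪g, u⟫‖, sq_nonneg (‖f - V u‖ * ‖g‖)]
    simpa [hg, sub_eq_zero] using this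
  intro hinj
  refine hu (hinj ?_)
  simp [hgu, ← hf]

end

/-- **Theorem (left-invertibility of rank-one perturbations of isometries).**
`V + f ⊗ g` is left-invertible iff
`c(V;f,g) = (‖f‖² − ‖V*f‖²) ‖g‖² + |1 + ⟨V*f, g⟩|² ≠ 0`. -/
theorem leftInvertible_rankOne_perturbation_iff
    {H : Type*} [NormedAddCommGroup H] [InnerProductSpace ℂ H] [CompleteSpace H]
    (V : H →L[ℂ] H) (hV : (adjoint V) ∘L V = 1) (f g : H) :
    (∃ S : H →L[ℂ] H, S ∘L (V + rankOne f g) = 1) ↔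
      (‖f‖ ^ 2 - ‖adjoint V f‖ ^ 2) * ‖g‖ ^ 2
        + ‖(1 : ℂ) + (inner ℂ g (adjoint V f) : ℂ)‖ ^ 2 ≠ 0 := by
  change (∃ S : H →L[ℂ] H, S ∘L (V + InnerProductSpace.rankOne ℂ f g) = 1) ↔ _
  constructor
  · rintro ⟨S, hS⟩ hc
    have hleft : Function.LeftInverse S (V + InnerProductSpace.rankOne ℂ f g) := fun x ↦ by
      simpa using DFunLike.congr_fun hS x
    exact not_injective_add_rankOne hV f g hc hleft.injective
  · intro hc
    obtain ⟨B, hB⟩ := exists_leftInverse_one_add_rankOne (adjoint V f) g (‖f‖ ^ 2) hc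
    refine ⟨B ∘L adjoint (V + InnerProductSpace.rankOne ℂ f g), ?_⟩
    rw [comp_assoc, adjoint_comp_add_rankOne hV, hB]
end

section
/- Let H be a complex Hilbert space, let V : H → H be a bounded isometry, and let f, g ∈ H be such that c := c(V;f,g) = (‖f‖² − ‖V*f‖²)‖g‖² + |1 + ⟨V*f,g⟩|² is nonzero. Set R = (1 + ⟨g, V*f⟩) (V*f)⊗g and X = I + (1/c)·( ‖g‖² (V*f)⊗(V*f) + (‖V*f‖² − ‖f‖²) g⊗g − (R + R*) ). Then L = X (V + f⊗g)* is a left inverse of V + f⊗g, i.e., X (V + f⊗g)* (V + f⊗g) = I. -/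
/-!
With `u = V*f`, the isometry property gives
`(V + f⊗g)*(V + f⊗g) = I + u⊗g + g⊗u + ‖f‖² g⊗g`, a perturbation of the identity supported on
`span {u, g}`. The inverse of such an operator is again `I` plus a combination of `u⊗u`, `u⊗g`,
`g⊗u`, `g⊗g`, obtained by inverting a `2 × 2` system whose determinant is `c`; checking it reduces
to a polynomial identity in the Gram entries `⟨u,u⟩`, `⟨g,g⟩`, `⟨u,g⟩`, `⟨g,u⟩`.
-/

open ContinuousLinearMap

open scoped InnerProductSpace ComplexConjugate

section
variable {H : Type*} [NormedAddCommGroup H] [InnerProductSpace ℂ H]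

@[simp]
lemma rankOne_apply (f g h : H) : rankOne f g h = ⟪g, h⟫_ℂ • f := rfl

lemma inner_self_eq_ofReal_norm_sq (x : H) : ⟪x, x⟫_ℂ = (‖x‖ : ℂ) ^ 2 :=
  inner_self_eq_norm_sq_to_K x

lemma comp_rankOne (T : H →L[ℂ] H) (f g : H) : T ∘L rankOne f g = rankOne (T f) g := by
  ext h; simp

lemma rankOne_comp_rankOne (a b c d : H) :
    rankOne a b ∘L rankOne c d = ⟪b, c⟫_ℂ • rankOne a d := by
  ext h; simp [smul_smul, mul_comm]

lemma one_add_rankOne_left_inverse (u g : H) (a c : ℂ)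
    (hc : c = (a - ⟪u, u⟫_ℂ) * ⟪g, g⟫_ℂ + (1 + ⟪g, u⟫_ℂ) * (1 + ⟪u, g⟫_ℂ)) (hc0 : c ≠ 0) :
    (1 + c⁻¹ • (⟪g, g⟫_ℂ • rankOne u u + (⟪u, u⟫_ℂ - a) • rankOne g g
        - ((1 + ⟪u, g⟫_ℂ) • rankOne u g + (1 + ⟪g, u⟫_ℂ) • rankOne g u)))
      ∘L (1 + rankOne u g + rankOne g u + a • rankOne g g) = 1 := by
  ext h
  simp only [comp_apply, add_apply, one_apply_eq_self, smul_apply, sub_apply,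
    rankOne_apply, map_add, map_smul, smul_add, smul_sub, smul_smul]
  match_scalars
  · simp
  all_goals subst hc; field_simp; ring

variable [CompleteSpace H]

lemma rankOne_comp (T : H →L[ℂ] H) (f g : H) : rankOne f g ∘L T = rankOne f (adjoint T g) := by
  ext h; simp [adjoint_inner_left]

lemma adjoint_rankOne (f g : H) : adjoint (rankOne f g) = rankOne g f :=
  ((eq_adjoint_iff _ _).2 fun x y => by simp [inner_smul_left, inner_smul_right, mul_comm]).symm

lemma adjoint_add_rankOne_comp_self {V : H →L[ℂ] H} (hV : adjoint V ∘L V = 1) (f g : H) :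
    adjoint (V + rankOne f g) ∘L (V + rankOne f g)
      = 1 + rankOne (adjoint V f) g + rankOne g (adjoint V f) + ⟪f, f⟫_ℂ • rankOne g g := by
  rw [map_add, adjoint_rankOne, add_comp, comp_add, comp_add, hV, comp_rankOne, rankOne_comp,
    rankOne_comp_rankOne]
  abel
end

/-- **Explicit left inverse.** If `c = c(V;f,g) ≠ 0`, then with
`R = (1 + ⟨g, V*f⟩) (V*f) ⊗ g` and
`X = I + (1/c)(‖g‖² (V*f)⊗(V*f) + (‖V*f‖² − ‖f‖²) g⊗g − (R + R*))`,
the operator `X (V + f⊗g)*` is a left inverse of `V + f⊗g`. -/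
theorem explicit_left_inverse
    {H : Type*} [NormedAddCommGroup H] [InnerProductSpace ℂ H] [CompleteSpace H]
    (V : H →L[ℂ] H) (hV : (adjoint V) ∘L V = 1) (f g : H)
    (c : ℝ)
    (hc : c = (‖f‖ ^ 2 - ‖adjoint V f‖ ^ 2) * ‖g‖ ^ 2
        + ‖(1 : ℂ) + (inner ℂ g (adjoint V f) : ℂ)‖ ^ 2)
    (hc0 : c ≠ 0)
    (R : H →L[ℂ] H)
    (hR : R = ((1 : ℂ) + (inner ℂ (adjoint V f) g : ℂ)) • rankOne (adjoint V f) g)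
    (X : H →L[ℂ] H)
    (hX : X = 1 + ((c : ℂ))⁻¹ •
        (((‖g‖ : ℂ) ^ 2) • rankOne (adjoint V f) (adjoint V f)
          + (((‖adjoint V f‖ ^ 2 - ‖f‖ ^ 2 : ℝ) : ℂ)) • rankOne g g
          - (R + adjoint R))) :
    X ∘L adjoint (V + rankOne f g) ∘L (V + rankOne f g) = 1 := by
  set u := adjoint V f
  have hR_sum : R + adjoint R = (1 + ⟪u, g⟫_ℂ) • rankOne u g + (1 + ⟪g, u⟫_ℂ) • rankOne g u := by
    rw [hR, adjoint.map_smulₛₗ, adjoint_rankOne, map_add, map_one, inner_conj_symm]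
  have hc_gram : (c : ℂ) = (⟪f, f⟫_ℂ - ⟪u, u⟫_ℂ) * ⟪g, g⟫_ℂ + (1 + ⟪g, u⟫_ℂ) * (1 + ⟪u, g⟫_ℂ) := by
    have hconj : 1 + ⟪u, g⟫_ℂ = conj (1 + ⟪g, u⟫_ℂ) := by
      rw [map_add, map_one, inner_conj_symm]
    rw [hconj, Complex.mul_conj', hc]
    push_cast
    simp only [inner_self_eq_ofReal_norm_sq]
  have hX_gram : X = 1 + (c : ℂ)⁻¹ • (⟪g, g⟫_ℂ • rankOne u u + (⟪u, u⟫_ℂ - ⟪f, f⟫_ℂ) • rankOne g g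
      - ((1 + ⟪u, g⟫_ℂ) • rankOne u g + (1 + ⟪g, u⟫_ℂ) • rankOne g u)) := by
    rw [hX, hR_sum]
    push_cast
    simp only [inner_self_eq_ofReal_norm_sq]
  rw [adjoint_add_rankOne_comp_self hV, hX_gram]
  exact one_add_rankOne_left_inverse u g _ _ hc_gram (mod_cast hc0)
end

section
/- Let H be a complex Hilbert space, let V : H → H be a bounded isometry, and let f, g ∈ H be nonzero vectors. If f does not belong to the range of V, then V + f⊗g is left-invertible. -/
/-!
Write `f = V a + q` with `q ≠ 0` orthogonal to the range of `V`, which is closed since `V` is an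
isometry. With `t = ⟨x, g⟩` we get `(V + f ⊗ g) x = V (x + t a) + t q`, an orthogonal sum, so both
`‖x + t a‖` and `‖t‖ ‖q‖` are at most `‖(V + f ⊗ g) x‖`; hence `V + f ⊗ g` is bounded below.
In a Hilbert space a bounded-below operator has closed, orthogonally complemented range, so it
has a bounded left inverse.
-/

open ContinuousLinearMap

open scoped InnerProductSpace NNReal

section

variable {𝕜 E F : Type*} [RCLike 𝕜] [NormedAddCommGroup E] [InnerProductSpace 𝕜 E]
  [NormedAddCommGroup F] [InnerProductSpace 𝕜 F]

theorem ContinuousLinearMap.HasLeftInverse.of_antilipschitz [CompleteSpace E] [CompleteSpace F]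
    {T : E →L[𝕜] F} {C : ℝ≥0} (hT : AntilipschitzWith C T) : T.HasLeftInverse := by
  have hclosed : IsClosed (Set.range T) := hT.isClosed_range T.uniformContinuous
  have : CompleteSpace T.range := hclosed.completeSpace_coe
  exact .of_injective_of_isClosed_range_of_closedComplement_range hT.injective hclosed
    ⟨T.range.orthogonalProjectionOnto, T.range.orthogonalProjectionOnto_mem_subspace_eq_self⟩

theorem exists_eq_apply_add_orthogonal_of_notMem_range [CompleteSpace E] {V : E →L[𝕜] F}
    (hV : ∀ x, ‖V x‖ = ‖x‖) {f : F} (hf : f ∉ Set.range V) :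
    ∃ a q, q ≠ 0 ∧ (∀ y, ⟪V y, q⟫_𝕜 = 0) ∧ f = V a + q := by
  have hV : Isometry V := AddMonoidHomClass.isometry_of_norm V hV
  have : CompleteSpace V.range :=
    (hV.antilipschitz.isComplete_range hV.lipschitz.uniformContinuous).completeSpace_coe
  obtain ⟨_, ⟨a, rfl⟩, q, hq, rfl⟩ := V.range.exists_add_mem_mem_orthogonal f
  refine ⟨a, q, ?_, fun y => (Submodule.mem_orthogonal _ _).mp hq _ ⟨y, rfl⟩, rfl⟩
  rintro rfl
  exact hf ⟨a, (add_zero _).symm⟩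

theorem mul_norm_le_mul_norm_isometry_add_orthogonal {V : E →L[𝕜] F} (hV : ∀ x, ‖V x‖ = ‖x‖)
    {q : F} (hq : ∀ y, ⟪V y, q⟫_𝕜 = 0) (a x : E) (t : 𝕜) :
    ‖q‖ * ‖x‖ ≤ (‖q‖ + ‖a‖) * ‖V (x + t • a) + t • q‖ := by
  set y := V (x + t • a) + t • q
  have hpyth : ‖y‖ * ‖y‖ = ‖x + t • a‖ * ‖x + t • a‖ + (‖t‖ * ‖q‖) * (‖t‖ * ‖q‖) := by
    rw [norm_add_sq_eq_norm_sq_add_norm_sq_of_inner_eq_zero (𝕜 := 𝕜) _ _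
      (by rw [inner_smul_right, hq, mul_zero]), hV, norm_smul]
  have h₁ : ‖x + t • a‖ ≤ ‖y‖ := by nlinarith [norm_nonneg y, norm_nonneg (x + t • a)]
  have h₂ : ‖t‖ * ‖q‖ ≤ ‖y‖ := by nlinarith [norm_nonneg y, norm_nonneg t, norm_nonneg q]
  have h₃ : ‖x‖ ≤ ‖x + t • a‖ + ‖t‖ * ‖a‖ := by
    simpa [norm_smul] using norm_le_add_norm_add x (t • a)
  calc ‖q‖ * ‖x‖ ≤ ‖q‖ * ‖x + t • a‖ + ‖a‖ * (‖t‖ * ‖q‖) := by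
        nlinarith [norm_nonneg q, norm_nonneg a]
    _ ≤ (‖q‖ + ‖a‖) * ‖y‖ := by nlinarith [norm_nonneg q, norm_nonneg a]

end

theorem leftInvertible_of_not_mem_range_general
    {H : Type*} [NormedAddCommGroup H] [InnerProductSpace ℂ H] [CompleteSpace H]
    (V : H →L[ℂ] H) (hV : (adjoint V) ∘L V = 1) (f g : H)
    (hfr : f ∉ Set.range V) :
    ∃ S : H →L[ℂ] H, S ∘L (V + rankOne f g) = 1 := by
  have hVnorm : ∀ x, ‖V x‖ = ‖x‖ := V.norm_map_iff_adjoint_comp_self.mpr hV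
  obtain ⟨a, q, hq0, hqV, rfl⟩ :=
    exists_eq_apply_add_orthogonal_of_notMem_range hVnorm hfr
  have hT : ∀ x, (V + rankOne (V a + q) g) x = V (x + ⟪g, x⟫_ℂ • a) + ⟪g, x⟫_ℂ • q := fun x => by
    simp only [rankOne, add_apply, smulRight_apply, innerSL_apply_apply, map_add, map_smul,
      smul_add]
    abel
  have hbound : ∀ x, ‖x‖ ≤ ((‖q‖₊ + ‖a‖₊) / ‖q‖₊ : ℝ≥0) * ‖(V + rankOne (V a + q) g) x‖ :=
    fun x => by
      rw [NNReal.coe_div, NNReal.coe_add, coe_nnnorm, coe_nnnorm, div_mul_eq_mul_div,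
        le_div_iff₀' (norm_pos_iff.mpr hq0), hT]
      exact mul_norm_le_mul_norm_isometry_add_orthogonal hVnorm hqV a x _
  obtain ⟨S, hS⟩ := HasLeftInverse.of_antilipschitz (antilipschitz_of_bound _ hbound)
  exact ⟨S, ext hS⟩

/-- **Corollary.** If `V` is an isometry, `f, g` are nonzero, and `f` is not in
the range of `V`, then `V + f ⊗ g` is left-invertible. -/
theorem leftInvertible_of_not_mem_range
    {H : Type*} [NormedAddCommGroup H] [InnerProductSpace ℂ H] [CompleteSpace H]
    (V : H →L[ℂ] H) (hV : (adjoint V) ∘L V = 1) (f g : H)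
    (hf : f ≠ 0) (hg : g ≠ 0) (hfr : f ∉ Set.range V) :
    ∃ S : H →L[ℂ] H, S ∘L (V + rankOne f g) = 1 :=
  leftInvertible_of_not_mem_range_general V hV f g hfr
end

section
/- Let H be a complex Hilbert space, let V : H → H be a bounded isometry, let f₀ ∈ ker V*, and let m, n be nonnegative integers with m > n. Define f_t = Vᵗ f₀ for t ≥ 0 and f_t = 0 for t < 0, and set S = V + f_m⊗f_n. Then for every k ≥ 1, S^{k+1} = V^{k+1} + Σ_{j=0}^{k} f_{m+j}⊗f_{n−k+j}. -/
open ContinuousLinearMap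

/-- The family `f_t = Vᵗ f₀` for `t ≥ 0`, and `f_t = 0` for `t < 0`. -/
noncomputable def fIter {H : Type*} [NormedAddCommGroup H] [InnerProductSpace ℂ H]
    (V : H →L[ℂ] H) (f₀ : H) (t : ℤ) : H :=
  if 0 ≤ t then (V ^ t.toNat) f₀ else 0

/-!
Since `V*V = 1` and `V* f₀ = 0`, the adjoint `V*` acts on the family `f_t` as the backward
shift `f_t ↦ f_{t-1}`, while `V` is the forward shift on `t ≥ 0`; in particular the `f_t` are
pairwise orthogonal (`f₀` is a wandering vector). Write `S = V + R` with `R = f_m ⊗ f_n` and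
multiply the formula for `S^{k+1}` by `S` on the left: `V` shifts the first index of every
summand, `R V^{k+1} = f_m ⊗ (V*)^{k+1} f_n = f_m ⊗ f_{n-k-1}` supplies the new summand, and
`R (f_{m+j} ⊗ g) = ⟨f_{m+j}, f_n⟩ (f_m ⊗ g)` vanishes because `m + j > n`.
-/

section

variable {H : Type*} [NormedAddCommGroup H] [InnerProductSpace ℂ H]

theorem rankOne_eq_innerProductSpace_rankOne (f g : H) :
    rankOne f g = InnerProductSpace.rankOne ℂ f g :=
  rfl

variable (V : H →L[ℂ] H) (f₀ : H)

theorem fIter_of_neg {t : ℤ} (ht : t < 0) : fIter V f₀ t = 0 := by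
  simp [fIter, not_le.2 ht]

theorem fIter_natCast (p : ℕ) : fIter V f₀ p = (V ^ p) f₀ := by
  simp [fIter]

theorem fIter_add_one {t : ℤ} (ht : 0 ≤ t) : fIter V f₀ (t + 1) = V (fIter V f₀ t) := by
  lift t to ℕ using ht
  rw [← Nat.cast_succ, fIter_natCast, fIter_natCast, pow_succ', mul_apply_eq_comp]

theorem mul_rankOne_fIter {t : ℤ} (ht : 0 ≤ t) (g : H) :
    V * rankOne (fIter V f₀ t) g = rankOne (fIter V f₀ (t + 1)) g := by
  rw [fIter_add_one V f₀ ht, rankOne_eq_innerProductSpace_rankOne, mul_def,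
    InnerProductSpace.comp_rankOne]
  rfl

variable [CompleteSpace H] {V f₀} (hV : adjoint V ∘L V = 1) (hf₀ : adjoint V f₀ = 0)
include hV hf₀

theorem adjoint_fIter (t : ℤ) : adjoint V (fIter V f₀ t) = fIter V f₀ (t - 1) := by
  rcases lt_trichotomy t 0 with ht | rfl | ht
  · rw [fIter_of_neg V f₀ ht, fIter_of_neg V f₀ (by omega), map_zero]
  · simpa [fIter] using hf₀
  · obtain ⟨s, hs, rfl⟩ : ∃ s : ℤ, 0 ≤ s ∧ t = s + 1 := ⟨t - 1, by omega, by ring⟩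
    rw [fIter_add_one V f₀ hs, ← comp_apply, hV, one_apply_eq_self, add_sub_cancel_right]

theorem adjoint_pow_fIter (p : ℕ) (t : ℤ) :
    adjoint (V ^ p) (fIter V f₀ t) = fIter V f₀ (t - p) := by
  induction p with
  | zero => simp [adjoint_one]
  | succ p ih =>
    rw [pow_succ, mul_def, adjoint_comp, comp_apply, ih, adjoint_fIter hV hf₀]
    push_cast
    ring_nf

theorem inner_fIter_eq_zero {a b : ℤ} (hab : a < b) :
    inner ℂ (fIter V f₀ a) (fIter V f₀ b) = 0 := by
  rcases lt_or_ge b 0 with hb | hb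
  · rw [fIter_of_neg V f₀ hb, inner_zero_right]
  lift b to ℕ using hb
  rw [fIter_natCast, ← adjoint_inner_left, adjoint_pow_fIter hV hf₀,
    fIter_of_neg V f₀ (by omega), inner_zero_left]

theorem rankOne_fIter_mul_pow (f : H) (t : ℤ) (p : ℕ) :
    rankOne f (fIter V f₀ t) * V ^ p = rankOne f (fIter V f₀ (t - p)) := by
  rw [rankOne_eq_innerProductSpace_rankOne, mul_def, InnerProductSpace.rankOne_comp,
    adjoint_pow_fIter hV hf₀]
  rfl

theorem rankOne_fIter_mul_rankOne_fIter (f g : H) {a b : ℤ} (hab : a < b) :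
    rankOne f (fIter V f₀ a) * rankOne (fIter V f₀ b) g = 0 := by
  rw [rankOne_eq_innerProductSpace_rankOne, mul_def, rankOne_eq_innerProductSpace_rankOne,
    InnerProductSpace.rankOne_comp_rankOne, inner_fIter_eq_zero hV hf₀ hab, zero_smul]

theorem pow_succ_add_rankOne_fIter {m n : ℕ} (hmn : n < m) (k : ℕ) :
    (V + rankOne (fIter V f₀ m) (fIter V f₀ n)) ^ (k + 1)
      = V ^ (k + 1) + ∑ j ∈ Finset.range (k + 1),
          rankOne (fIter V f₀ ((m : ℤ) + j)) (fIter V f₀ ((n : ℤ) - k + j)) := by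
  induction k with
  | zero => simp
  | succ k ih =>
    set R := rankOne (fIter V f₀ m) (fIter V f₀ n)
    have shift : ∀ j ∈ Finset.range (k + 1),
        V * rankOne (fIter V f₀ ((m : ℤ) + j)) (fIter V f₀ ((n : ℤ) - k + j))
          = rankOne (fIter V f₀ ((m : ℤ) + ↑(j + 1)))
              (fIter V f₀ ((n : ℤ) - ↑(k + 1) + ↑(j + 1))) := by
      intro j _
      rw [mul_rankOne_fIter V f₀ (by positivity)]
      congr 2; push_cast; ring
    have head : R * V ^ (k + 1)
        = rankOne (fIter V f₀ ((m : ℤ) + ↑(0 : ℕ)))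
            (fIter V f₀ ((n : ℤ) - ↑(k + 1) + ↑(0 : ℕ))) := by
      rw [rankOne_fIter_mul_pow hV hf₀]
      simp
    have vanish : ∀ j ∈ Finset.range (k + 1),
        R * rankOne (fIter V f₀ ((m : ℤ) + j)) (fIter V f₀ ((n : ℤ) - k + j)) = 0 :=
      fun j _ ↦ rankOne_fIter_mul_rankOne_fIter hV hf₀ _ _ (by omega)
    rw [pow_succ', ih, add_mul, mul_add, mul_add, ← pow_succ', Finset.mul_sum, Finset.mul_sum,
      Finset.sum_congr rfl shift, head, Finset.sum_congr rfl vanish, Finset.sum_const_zero,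
      add_zero, Finset.sum_range_succ' (fun j : ℕ ↦
        rankOne (fIter V f₀ ((m : ℤ) + j)) (fIter V f₀ ((n : ℤ) - ↑(k + 1) + j)))]
    abel

end

/-- **Power formula.** If `V` is an isometry, `f₀ ∈ ker V*`, `m > n`, and
`S = V + f_m ⊗ f_n`, then `S^{k+1} = V^{k+1} + ∑_{j=0}^{k} f_{m+j} ⊗ f_{n-k+j}`
for every `k ≥ 1`. -/
theorem power_formula_rankOne_perturbation
    {H : Type*} [NormedAddCommGroup H] [InnerProductSpace ℂ H] [CompleteSpace H]
    (V : H →L[ℂ] H) (hV : (adjoint V) ∘L V = 1)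
    (f₀ : H) (hf₀ : adjoint V f₀ = 0) (m n : ℕ) (hmn : n < m) :
    ∀ k : ℕ, 1 ≤ k →
      (V + rankOne (fIter V f₀ (m : ℤ)) (fIter V f₀ (n : ℤ))) ^ (k + 1)
        = V ^ (k + 1)
          + ∑ j ∈ Finset.range (k + 1),
              rankOne (fIter V f₀ ((m : ℤ) + j)) (fIter V f₀ ((n : ℤ) - k + j)) :=
  fun k _ ↦ pow_succ_add_rankOne_fIter hV hf₀ hmn k
end

section
/- Let H be a complex Hilbert space, let V : H → H be a bounded isometry, and let f, g ∈ H satisfy V*g + ⟨g,f⟩g = 0. Set S = V + f⊗g. Then S^{n+1} = Vⁿ S for every n ≥ 1. -/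
open ContinuousLinearMap

/-! With `S = V + f ⊗ g`, the hypothesis says exactly `S* g = 0`. Since `(f ⊗ g) A = f ⊗ (A* g)`,
this gives `(f ⊗ g) S = 0`, hence `S² = V S`, and iterating `S² = V S` yields `Sⁿ⁺¹ = Vⁿ S`. -/

theorem pow_succ_eq_pow_mul_of_mul_self_eq {M : Type*} [Monoid M] {S V : M}
    (h : S * S = V * S) (n : ℕ) : S ^ (n + 1) = V ^ n * S := by
  induction n with
  | zero => simp
  | succ n ih => rw [pow_succ, ih, mul_assoc, h, ← mul_assoc, ← pow_succ]

section RankOne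

variable {H : Type*} [NormedAddCommGroup H] [InnerProductSpace ℂ H]

variable [CompleteSpace H]

theorem adjoint_add_rankOne_apply_right (V : H →L[ℂ] H) (f g : H) :
    adjoint (V + rankOne f g) g = adjoint V g + inner ℂ f g • g := by
  simp [rankOne_eq_innerProductSpace_rankOne]

theorem rankOne_comp_eq_zero {A : H →L[ℂ] H} (f : H) {g : H} (hg : adjoint A g = 0) :
    rankOne f g ∘L A = 0 := by
  rw [rankOne_eq_innerProductSpace_rankOne, InnerProductSpace.rankOne_comp, hg, map_zero]

end RankOne

theorem power_eq_of_kernel_condition_general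
    {H : Type*} [NormedAddCommGroup H] [InnerProductSpace ℂ H] [CompleteSpace H]
    (V : H →L[ℂ] H)
    (f g : H) (hfg : adjoint V g + (inner ℂ f g : ℂ) • g = 0) :
    ∀ n : ℕ, 1 ≤ n →
      (V + rankOne f g) ^ (n + 1) = (V ^ n) ∘L (V + rankOne f g) := by
  intro n _
  set S := V + rankOne f g
  have hSg : adjoint S g = 0 := by rwa [adjoint_add_rankOne_apply_right]
  have hSS : S * S = V * S := by
    rw [show S * S = V * S + rankOne f g ∘L S from add_mul _ _ _,
      rankOne_comp_eq_zero f hSg, add_zero]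
  exact pow_succ_eq_pow_mul_of_mul_self_eq hSS n

/-- **Power identity.** If `V` is an isometry and `V*g + ⟨g,f⟩g = 0` (inner
product linear in the first argument, so `⟨g,f⟩ = ⟪f,g⟫` in Mathlib's
convention), then `S = V + f ⊗ g` satisfies `S^{n+1} = Vⁿ S` for all `n ≥ 1`. -/
theorem power_eq_of_kernel_condition
    {H : Type*} [NormedAddCommGroup H] [InnerProductSpace ℂ H] [CompleteSpace H]
    (V : H →L[ℂ] H) (hV : (adjoint V) ∘L V = 1)
    (f g : H) (hfg : adjoint V g + (inner ℂ f g : ℂ) • g = 0) :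
    ∀ n : ℕ, 1 ≤ n →
      (V + rankOne f g) ^ (n + 1) = (V ^ n) ∘L (V + rankOne f g) :=
  power_eq_of_kernel_condition_general V f g hfg
end

section
/- Let H be a separable complex Hilbert space with orthonormal basis (e_n)_{n≥0}, let D ∈ B(H) be the diagonal operator D e_n = α_n e_n with all α_n ≠ 0, and let f = Σ a_n e_n and g = Σ b_n e_n be vectors in H with a_n ≠ 0 and b_n ≠ 0 for all n. Set T = D + f⊗g. Then T is not injective (i.e., 0 is an eigenvalue of T) if and only if the sequence (a_n/α_n)_{n≥0} is square summable and 1 + Σ_{n≥0} a_n \overline{b_n}/α_n = 0. -/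
open ContinuousLinearMap
open scoped ComplexConjugate

theorem rankOne_apply_s9 {H : Type*} [NormedAddCommGroup H] [InnerProductSpace ℂ H] (f g x : H) :
    rankOne f g x = inner ℂ g x • f :=
  rfl

namespace HilbertBasis

section

variable {ι 𝕜 E : Type*} [RCLike 𝕜] [NormedAddCommGroup E] [InnerProductSpace 𝕜 E]
  (e : HilbertBasis ι 𝕜 E)

theorem eq_zero_iff_forall_inner_eq_zero {x : E} : x = 0 ↔ ∀ i, inner 𝕜 (e i) x = 0 := by
  refine ⟨fun hx i => by rw [hx, inner_zero_right], fun h => e.repr.injective ?_⟩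
  ext i
  simp [e.repr_apply_apply, h i]

theorem exists_inner_eq_of_summable {w : ι → 𝕜} (hw : Summable fun i => ‖w i‖ ^ 2) :
    ∃ x, ∀ i, inner 𝕜 (e i) x = w i := by
  have hmem : Memℓp w 2 := memℓp_gen (by simpa using hw)
  exact ⟨e.repr.symm ⟨w, hmem⟩, fun i => by rw [← e.repr_apply_apply, e.repr.apply_symm_apply]⟩

theorem inner_apply_of_diagonal {α : ι → 𝕜} {D : E →L[𝕜] E} (hD : ∀ i, D (e i) = α i • e i)
    (i : ι) (x : E) : inner 𝕜 (e i) (D x) = α i * inner 𝕜 (e i) x := by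
  classical
  suffices (innerSL 𝕜 (e i)).comp D = α i • innerSL 𝕜 (e i) from congr($this x)
  refine ext_on (Submodule.dense_iff_topologicalClosure_eq_top.mpr e.dense_span) ?_
  rintro _ ⟨j, rfl⟩
  by_cases hij : i = j
  · subst hij
    simp [hD]
  · simp [hD, orthonormal_iff_ite.mp e.orthonormal, hij]

end

section

variable {ι H : Type*} [NormedAddCommGroup H] [InnerProductSpace ℂ H] (e : HilbertBasis ι ℂ H)
  {α : ι → ℂ} {D : H →L[ℂ] H} {f g : H}

theorem inner_eq_of_diagonal_add_rankOne_apply_eq_zero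
    (hD : ∀ i, D (e i) = α i • e i) (hα : ∀ i, α i ≠ 0) {x : H} (hx : (D + rankOne f g) x = 0)
    (i : ι) : inner ℂ (e i) x = -inner ℂ g x * (inner ℂ (e i) f / α i) := by
  have hi := congr(inner ℂ (e i) $hx)
  rw [add_apply, rankOne_apply_s9, inner_add_right, inner_smul_right, e.inner_apply_of_diagonal hD,
    inner_zero_right] at hi
  field_simp [hα i]
  linear_combination hi

theorem summable_and_one_add_tsum_eq_zero_of_diagonal_add_rankOne_apply_eq_zero
    (hD : ∀ i, D (e i) = α i • e i) (hα : ∀ i, α i ≠ 0) {x : H}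
    (hx : (D + rankOne f g) x = 0) (hx0 : x ≠ 0) :
    Summable (fun i => ‖inner ℂ (e i) f / α i‖ ^ 2) ∧
      1 + ∑' i, inner ℂ (e i) f * conj (inner ℂ (e i) g) / α i = 0 := by
  have hcoeff := e.inner_eq_of_diagonal_add_rankOne_apply_eq_zero hD hα hx
  set c := inner ℂ g x
  have hc : c ≠ 0 := fun hc0 => hx0 <| e.eq_zero_iff_forall_inner_eq_zero.mpr fun i => by
    simp [hcoeff i, hc0]
  constructor
  · have hx_sq := e.orthonormal.inner_products_summable x
    simp only [hcoeff, norm_mul, norm_neg, mul_pow] at hx_sq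
    exact (summable_mul_left_iff (by positivity)).mp hx_sq
  · have parseval := e.tsum_inner_mul_inner g x
    have hterm : ∀ i, inner ℂ g (e i) * inner ℂ (e i) x =
        -c * (inner ℂ (e i) f * conj (inner ℂ (e i) g) / α i) := fun i => by
      rw [hcoeff i, inner_conj_symm]
      ring
    rw [tsum_congr hterm, tsum_mul_left] at parseval
    have : c * (1 + ∑' i, inner ℂ (e i) f * conj (inner ℂ (e i) g) / α i) = 0 := by
      linear_combination -parseval
    exact (mul_eq_zero.mp this).resolve_left hc

theorem exists_diagonal_add_rankOne_apply_eq_zero_of_summable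
    (hD : ∀ i, D (e i) = α i • e i) (hα : ∀ i, α i ≠ 0)
    (hsum : Summable (fun i => ‖inner ℂ (e i) f / α i‖ ^ 2))
    (hone : 1 + ∑' i, inner ℂ (e i) f * conj (inner ℂ (e i) g) / α i = 0) :
    ∃ x, (D + rankOne f g) x = 0 ∧ x ≠ 0 := by
  obtain ⟨x, hx⟩ := e.exists_inner_eq_of_summable hsum
  have hDx : D x = f := by
    rw [← sub_eq_zero, e.eq_zero_iff_forall_inner_eq_zero]
    intro i
    rw [inner_sub_right, e.inner_apply_of_diagonal hD, hx, mul_div_cancel₀ _ (hα i), sub_self]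
  have hgx : inner ℂ g x = -1 := by
    rw [← e.tsum_inner_mul_inner, eq_neg_iff_add_eq_zero, add_comm, ← hone]
    congr 2 with i
    rw [hx, ← inner_conj_symm]
    ring
  refine ⟨x, ?_, ?_⟩
  · rw [add_apply, rankOne_apply_s9, hDx, hgx, neg_one_smul, add_neg_cancel]
  · rintro rfl
    simp at hgx

end

end HilbertBasis

theorem not_injective_diagonal_rankOne_iff_general
    {H : Type*} [NormedAddCommGroup H] [InnerProductSpace ℂ H]
    (e : HilbertBasis ℕ ℂ H) (α : ℕ → ℂ) (hα : ∀ n, α n ≠ 0)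
    (D : H →L[ℂ] H) (hD : ∀ n, D (e n) = α n • e n)
    (f g : H) :
    ¬ Function.Injective ⇑(D + rankOne f g) ↔
      (Summable (fun n => ‖(inner ℂ (e n) f : ℂ) / α n‖ ^ 2)
        ∧ 1 + ∑' n, (inner ℂ (e n) f : ℂ) * conj (inner ℂ (e n) g : ℂ) / α n = 0) := by
  rw [injective_iff_map_eq_zero]
  push Not
  constructor
  · rintro ⟨x, hx, hx0⟩
    exact e.summable_and_one_add_tsum_eq_zero_of_diagonal_add_rankOne_apply_eq_zero hD hα hx hx0
  · rintro ⟨hsum, hone⟩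
    exact e.exists_diagonal_add_rankOne_apply_eq_zero_of_summable hD hα hsum hone

/-- **Proposition (Ionascu).** Let `D` be a diagonal operator with nonzero
diagonal entries `α_n` and let `f, g` have nonzero Fourier coefficients
`a_n = ⟨f, e_n⟩`, `b_n = ⟨g, e_n⟩` (inner product linear in the first
argument, so `a_n = ⟪e_n, f⟫` in Mathlib's convention). Then `T = D + f ⊗ g`
admits `0` as an eigenvalue iff `(a_n/α_n)` is square summable and
`1 + ∑ a_n conj(b_n)/α_n = 0`. -/
theorem not_injective_diagonal_rankOne_iff
    {H : Type*} [NormedAddCommGroup H] [InnerProductSpace ℂ H] [CompleteSpace H]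
    (e : HilbertBasis ℕ ℂ H) (α : ℕ → ℂ) (hα : ∀ n, α n ≠ 0)
    (D : H →L[ℂ] H) (hD : ∀ n, D (e n) = α n • e n)
    (f g : H)
    (hf : ∀ n, (inner ℂ (e n) f : ℂ) ≠ 0) (hg : ∀ n, (inner ℂ (e n) g : ℂ) ≠ 0) :
    ¬ Function.Injective ⇑(D + rankOne f g) ↔
      (Summable (fun n => ‖(inner ℂ (e n) f : ℂ) / α n‖ ^ 2)
        ∧ 1 + ∑' n, (inner ℂ (e n) f : ℂ) * conj (inner ℂ (e n) g : ℂ) / α n = 0) :=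
  not_injective_diagonal_rankOne_iff_general e α hα D hD f g
end

section
/- Let H be a complex Hilbert space, let D ∈ B(H) be bounded below (there exists ε > 0 with ‖Dh‖ ≥ ε‖h‖ for all h ∈ H), and let f, g ∈ H. If T = D + f⊗g is injective, then T is bounded below, hence left-invertible. -/
/-!
If `T = D + K` with `K` compact were not bounded below, there would be unit vectors `uₙ` with
`T uₙ → 0`. Passing to a subsequence, `K uₙ → y`, hence `D uₙ → -y`; as `D` is bounded below it
is a closed embedding, so `uₙ` converges to a unit vector in the kernel of `T`. A bounded-below
operator into a Hilbert space has closed range, and its inverse on the range composed with the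
orthogonal projection onto the range is a left inverse.
-/

open ContinuousLinearMap

open Filter Topology NNReal

theorem Topology.IsClosedEmbedding.exists_tendsto_of_tendsto_comp {ι X Y : Type*}
    [TopologicalSpace X] [TopologicalSpace Y] {f : X → Y} (hf : IsClosedEmbedding f)
    {l : Filter ι} [l.NeBot] {u : ι → X} {y : Y} (hu : Tendsto (f ∘ u) l (𝓝 y)) :
    ∃ x, f x = y ∧ Tendsto u l (𝓝 x) := by
  obtain ⟨x, rfl⟩ : y ∈ Set.range f :=
    hf.isClosed_range.mem_of_tendsto hu (Eventually.of_forall fun _ ↦ ⟨_, rfl⟩)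
  exact ⟨x, rfl, hf.tendsto_nhds_iff.2 hu⟩

theorem isCompactOperator_smulRight {𝕜 E F : Type*} [NontriviallyNormedField 𝕜]
    [LocallyCompactSpace 𝕜] [NormedAddCommGroup E] [NormedSpace 𝕜 E] [NormedAddCommGroup F]
    [NormedSpace 𝕜 F] (φ : E →L[𝕜] 𝕜) (f : F) : IsCompactOperator (φ.smulRight f) :=
  (isCompactOperator_of_locallyCompactSpace_dom φ).clm_comp (toSpanSingleton 𝕜 f)

theorem isCompactOperator_rankOne {H : Type*} [NormedAddCommGroup H] [InnerProductSpace ℂ H]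
    (f g : H) : IsCompactOperator (rankOne f g) :=
  isCompactOperator_smulRight _ f

namespace ContinuousLinearMap

variable {𝕜 E : Type*} [RCLike 𝕜] [NormedAddCommGroup E] [NormedSpace 𝕜 E]

section

variable {F : Type*} [NormedAddCommGroup F] [NormedSpace 𝕜 F]

theorem exists_norm_eq_one_tendsto_zero_of_not_antilipschitz {T : E →L[𝕜] F}
    (hT : ¬ ∃ C, AntilipschitzWith C T) :
    ∃ u : ℕ → E, (∀ n, ‖u n‖ = 1) ∧ Tendsto (T ∘ u) atTop (𝓝 0) := by
  have (n : ℕ) : ∃ x : E, ‖x‖ = 1 ∧ ‖T x‖ < 1 / (n + 1) := by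
    by_contra! h
    refine hT ⟨n + 1, antilipschitz_of_bound_of_norm_one T fun x hx ↦ ?_⟩
    have := h x hx
    rw [div_le_iff₀' (by positivity)] at this
    exact_mod_cast this
  choose u hu_norm hu_lt using this
  exact ⟨u, hu_norm, squeeze_zero_norm (fun n ↦ (hu_lt n).le)
    tendsto_one_div_add_atTop_nhds_zero_nat⟩

theorem exists_antilipschitzWith_add_of_isCompactOperator [CompleteSpace E]
    {D K : E →L[𝕜] F} {c : ℝ≥0} (hD : AntilipschitzWith c D) (hK : IsCompactOperator K)
    (hinj : Function.Injective (D + K)) : ∃ C, AntilipschitzWith C (D + K) := by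
  by_contra h
  obtain ⟨u, hu_norm, hTu⟩ := exists_norm_eq_one_tendsto_zero_of_not_antilipschitz h
  obtain ⟨S, hS, hKS⟩ := hK.image_closedBall_subset_compact 1
  obtain ⟨y, -, φ, hφ, hKu⟩ :=
    hS.tendsto_subseq (x := K ∘ u) fun n ↦
      hKS ⟨u n, mem_closedBall_zero_iff.2 (hu_norm n).le, rfl⟩
  have hTuφ := hTu.comp hφ.tendsto_atTop
  have hDu : Tendsto (D ∘ u ∘ φ) atTop (𝓝 (0 - y)) := by
    convert hTuφ.sub hKu using 1
    ext n
    simp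
  obtain ⟨x, -, hux⟩ :=
    (hD.isClosedEmbedding D.uniformContinuous).exists_tendsto_of_tendsto_comp hDu
  have hTx : (D + K) x = 0 :=
    tendsto_nhds_unique (((D + K).continuous.tendsto x).comp hux) hTuφ
  have hx_norm : ‖x‖ = 1 :=
    tendsto_nhds_unique hux.norm (by simp [hu_norm])
  have hx_zero : x = 0 := hinj (hTx.trans (map_zero _).symm)
  simp [hx_zero] at hx_norm

end

theorem exists_comp_eq_id_of_antilipschitz [CompleteSpace E] {F : Type*}
    [NormedAddCommGroup F] [InnerProductSpace 𝕜 F] [CompleteSpace F] {T : E →L[𝕜] F} {c : ℝ≥0}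
    (hT : AntilipschitzWith c T) :
    ∃ S : F →L[𝕜] E, S ∘L T = .id 𝕜 E := by
  have hclosed := hT.isClosed_range T.uniformContinuous
  have : CompleteSpace T.range := hclosed.completeSpace_coe
  refine ⟨(T.equivRange hT.injective hclosed).symm ∘L T.range.orthogonalProjectionOnto, ?_⟩
  ext x
  have hx : T x ∈ T.range := T.mem_range_self x
  simpa using congrArg (T.equivRange hT.injective hclosed).symm
    (T.range.orthogonalProjectionOnto_mem_subspace_eq_self ⟨T x, hx⟩)

end ContinuousLinearMap

/-- **Proposition.** If `D` is bounded below and `T = D + f ⊗ g` is injective,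
then `T` is bounded below, hence left-invertible. -/
theorem boundedBelow_of_injective_rankOne_perturbation
    {H : Type*} [NormedAddCommGroup H] [InnerProductSpace ℂ H] [CompleteSpace H]
    (D : H →L[ℂ] H) (hD : ∃ ε > 0, ∀ h : H, ε * ‖h‖ ≤ ‖D h‖)
    (f g : H) (hinj : Function.Injective ⇑(D + rankOne f g)) :
    (∃ ε > 0, ∀ h : H, ε * ‖h‖ ≤ ‖(D + rankOne f g) h‖)
      ∧ ∃ S : H →L[ℂ] H, S ∘L (D + rankOne f g) = 1 := by
  obtain ⟨c, hc⟩ := antilipschitzWith_iff_exists_mul_le_norm.2 hD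
  obtain ⟨C, hC⟩ :=
    exists_antilipschitzWith_add_of_isCompactOperator hc (isCompactOperator_rankOne f g) hinj
  exact ⟨antilipschitzWith_iff_exists_mul_le_norm.1 ⟨C, hC⟩,
    exists_comp_eq_id_of_antilipschitz hC⟩
end
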